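/- For words over a binary alphabet {a,b}: a word w is k-universal if and only if w contains k disjoint consecutive factors each belonging to {ab, ba}; i.e., w admits a factorization w = s_0 d_1 s_1 d_2 ... d_k s_k where each d_i ∈ {ab, ba}. -/

import Mathlib

/-!
If `w` is `(k+1)`-universal it contains both letters; writing `x` for its first letter, the first
occurrence of `!x` is immediately preceded by an `x`, so `w = s ++ [x, !x] ++ t`. Every word
`(!x) :: u` embeds in `w` with its first letter at or after that occurrence, hence `u` embeds in `t`
and `t` is `k`-universal; induction gives the factorization. Conversely each block `ab` or `ba`
contains both letters, so a word of length `k` embeds one letter per block.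
-/

namespace List

variable {α : Type*}

def IsUniversal (k : ℕ) (w : List α) : Prop :=
  ∀ u : List α, u.length = k → u.Sublist w

theorem IsUniversal.mem {k : ℕ} {w : List α} (h : IsUniversal (k + 1) w) (c : α) : c ∈ w :=
  (h (replicate (k + 1) c) length_replicate).subset (mem_replicate.mpr ⟨k.succ_ne_zero, rfl⟩)

theorem sublist_of_cons_sublist_append_cons {y : α} {s t u : List α} (hy : y ∉ s)
    (h : (y :: u).Sublist (s ++ y :: t)) : u.Sublist t := by
  induction s with
  | nil => exact cons_sublist_cons.mp h
  | cons z s ih =>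
    cases h with
    | cons _ h => exact ih (fun hs => hy (mem_cons_of_mem z hs)) h
    | cons_cons _ _ => exact absurd mem_cons_self hy

theorem IsUniversal.of_append_cons {k : ℕ} {y : α} {s t : List α}
    (h : IsUniversal (k + 1) (s ++ y :: t)) (hy : y ∉ s) : IsUniversal k t :=
  fun u hu => sublist_of_cons_sublist_append_cons hy (h (y :: u) (by simp [hu]))

theorem isUniversal_flatten {L : List (List α)} (hL : ∀ x ∈ L, ∀ c, c ∈ x) :
    IsUniversal L.length L.flatten := by
  induction L with
  | nil => intro u hu; simp [length_eq_zero_iff.mp hu]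
  | cons x L ih =>
    rintro (_ | ⟨c, u⟩) hu
    · exact nil_sublist _
    · have hc : [c].Sublist x := singleton_sublist.mpr (hL x mem_cons_self c)
      have hu : u.Sublist L.flatten :=
        ih (fun y hy => hL y (mem_cons_of_mem x hy)) u (by simpa using hu)
      simpa using hc.append hu

theorem exists_first_switch (x : Bool) {w : List Bool} (h : (!x) ∈ w) :
    ∃ s t, x :: w = s ++ x :: (!x) :: t ∧ (!x) ∉ s := by
  induction w with
  | nil => simp at h
  | cons c w ih =>
    by_cases hc : c = !x
    · exact ⟨[], w, by simp [hc], not_mem_nil⟩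
    · have hcx : c = x := by simpa using hc
      obtain ⟨s, t, hw, hs⟩ := ih (by simpa [hc, eq_comm] using h)
      refine ⟨x :: s, t, by simp [hcx, hw], ?_⟩
      simp [hs]

theorem IsUniversal.exists_eq_append_switch {k : ℕ} {w : List Bool} (h : IsUniversal (k + 1) w) :
    ∃ s x t, w = s ++ [x, !x] ++ t ∧ IsUniversal k t := by
  obtain _ | ⟨x, w⟩ := w
  · exact absurd (h.mem true) not_mem_nil
  have hw : (!x) ∈ w := by simpa using h.mem (!x)
  obtain ⟨s, t, hst, hs⟩ := exists_first_switch x hw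
  refine ⟨s, x, t, by simpa using hst, ?_⟩
  rw [hst, ← singleton_append, ← append_assoc] at h
  exact h.of_append_cons (by simp [hs])

end List

open List

theorem Bool.switch_eq_or_eq {a b : Bool} (hab : a ≠ b) (x : Bool) :
    [x, !x] = [a, b] ∨ [x, !x] = [b, a] := by
  revert a b x; decide

theorem Bool.mem_of_eq_or_eq {a b : Bool} (hab : a ≠ b) {d : List Bool}
    (hd : d = [a, b] ∨ d = [b, a]) (c : Bool) : c ∈ d := by
  rcases hd with rfl | rfl <;> revert a b c <;> decide

theorem List.IsUniversal.exists_factorization {a b : Bool} (hab : a ≠ b) {k : ℕ} {w : List Bool}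
    (h : IsUniversal k w) :
    ∃ (s₀ : List Bool) (l : List (List Bool × List Bool)),
      l.length = k ∧ (∀ p ∈ l, p.1 = [a, b] ∨ p.1 = [b, a]) ∧
        w = s₀ ++ (l.map fun p => p.1 ++ p.2).flatten := by
  induction k generalizing w with
  | zero => exact ⟨w, [], rfl, by simp, by simp⟩
  | succ k ih =>
    obtain ⟨s, x, t, rfl, ht⟩ := h.exists_eq_append_switch
    obtain ⟨s₀, l, hl, hd, rfl⟩ := ih ht
    refine ⟨s, ([x, !x], s₀) :: l, by simp [hl], ?_, by simp⟩
    rintro p (_ | ⟨_, hp⟩)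
    exacts [Bool.switch_eq_or_eq hab x, hd p hp]

/-- Over the binary alphabet, w is k-universal iff w factors as
s₀ d₁ s₁ d₂ ⋯ d_k s_k with each d_i ∈ {ab, ba}. -/
theorem binary_universal_iff {a b : Bool} (hab : a ≠ b) (w : List Bool) (k : ℕ) :
    (∀ u : List Bool, u.length = k → u.Sublist w) ↔
      ∃ (s₀ : List Bool) (l : List (List Bool × List Bool)),
        l.length = k ∧
        (∀ p ∈ l, p.1 = [a, b] ∨ p.1 = [b, a]) ∧
        w = s₀ ++ (l.map fun p => p.1 ++ p.2).flatten := by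
  refine ⟨fun h => IsUniversal.exists_factorization hab h, ?_⟩
  rintro ⟨s₀, l, rfl, hd, rfl⟩ u hu
  have hblocks : ∀ d ∈ l.map (fun p => p.1 ++ p.2), ∀ c, c ∈ d := by
    simp only [mem_map, forall_exists_index, and_imp]
    rintro _ p hp rfl c
    exact mem_append_left _ (Bool.mem_of_eq_or_eq hab (hd p hp) c)
  exact (isUniversal_flatten hblocks u (by simpa using hu)).trans (sublist_append_right _ _)
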